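/- arXiv:2511.13613 — 4 statements merged into one kernel-verified Lean document; each statement's English description precedes it below -/
import Mathlib

section
/- If the subgroup K of ℓ-th powers (with ℓ ≥ 2) is a difference set of the additive group of F_q, then k = |K| is odd and ℓ is even. -/
/-- The set of `ℓ`-th powers in `Fˣ`, viewed inside `F`. -/
def Kset (F : Type*) [Field F] (ℓ : ℕ) : Set F :=
  {x : F | ∃ y : Fˣ, x = ((y ^ ℓ : Fˣ) : F)}

/-- `H` is a difference set of `(F, +)` with parameter `lam`. -/
def IsDiffSet {F : Type*} [Field F] (H : Set F) (lam : ℕ) : Prop :=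
  ∀ z : F, z ≠ 0 →
    Nat.card {p : F × F // p.1 ∈ H ∧ p.2 ∈ H ∧ p.1 - p.2 = z} = lam

/-! If `-1` were an `ℓ`-th power, the set `K` of `ℓ`-th powers would be closed under negation, and
the involution `(a, b) ↦ (-b, -a)` on the representations of `2x` as a difference in `K` would show
`λ ≡ [x ∈ K] (mod 2)` for every `x ≠ 0`; since `1 ∈ K` while `K` misses some unit (as `ℓ ≥ 2`),
this is impossible. So `-1 ∉ K`; as `K` is a subgroup of order `k` of the cyclic group `F_q^×` and
`-1` is the only element of order two, `k` is odd, and then `kℓ = q - 1` forces `ℓ` even. -/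

theorem Function.Involutive.card_modEq_card_fixedPoints {α : Type*} [Finite α] {f : α → α}
    (hf : Function.Involutive f) :
    Nat.card α ≡ Nat.card (Function.fixedPoints f) [MOD 2] := by
  classical
  cases nonempty_fintype α
  have : Fact (Nat.Prime 2) := ⟨Nat.prime_two⟩
  have hf2 : (show Function.End α from f) ^ 2 ^ 1 = 1 := funext hf
  simpa only [Nat.card_eq_fintype_card] using Equiv.Perm.card_fixedPoints_modEq hf2

section DiffSet

variable {F : Type*} [Field F] [Finite F] {H : Set F} {lam : ℕ}

theorem IsDiffSet.odd_iff_mem (hds : IsDiffSet H lam) (hneg : ∀ a ∈ H, -a ∈ H)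
    (h2 : (2 : F) ≠ 0) {x : F} (hx : x ≠ 0) : Odd lam ↔ x ∈ H := by
  let T := {p : F × F // p.1 ∈ H ∧ p.2 ∈ H ∧ p.1 - p.2 = 2 * x}
  let f : T → T := fun p =>
    ⟨(-p.1.2, -p.1.1), hneg _ p.2.2.1, hneg _ p.2.1, by rw [neg_sub_neg]; exact p.2.2.2⟩
  have hf : Function.Involutive f := fun p => Subtype.ext (by simp [f])
  have hfix : ∀ p : T, f p = p ↔ p.1 = (x, -x) := by
    rintro ⟨⟨a, b⟩, -, -, hab⟩
    rw [Subtype.ext_iff]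
    simp only [f, Prod.ext_iff]
    constructor
    · intro h
      have hba : -b = a := h.1
      have ha : a = x := mul_left_cancel₀ h2 (by linear_combination hab - hba)
      exact ⟨ha, by linear_combination -hba - ha⟩
    · rintro ⟨ha, hb⟩
      simp [ha, hb]
  have hmod := hf.card_modEq_card_fixedPoints
  rw [hds _ (mul_ne_zero h2 hx)] at hmod
  by_cases hxH : x ∈ H
  · have hcard : Nat.card (Function.fixedPoints f) = 1 :=
      Nat.card_eq_one_iff_exists.2 ⟨⟨⟨(x, -x), hxH, hneg x hxH, by ring⟩, (hfix _).2 rfl⟩, fun q =>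
        Subtype.ext (Subtype.ext ((hfix q.1).1 q.2))⟩
    simp only [hxH, iff_true, Nat.odd_iff]
    simpa [hcard, Nat.ModEq] using hmod
  · have hcard : Nat.card (Function.fixedPoints f) = 0 := by
      rw [Nat.card_eq_zero]
      refine Or.inl ⟨fun q => hxH ?_⟩
      simpa [(hfix q.1).1 q.2] using q.1.2.1
    simp only [hxH, iff_false, Nat.not_odd_iff_even, Nat.even_iff]
    simpa [hcard, Nat.ModEq] using hmod

end DiffSet

theorem Subgroup.neg_one_mem_of_even_card {R : Type*} [Ring R] [NoZeroDivisors R]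
    (K : Subgroup Rˣ) [Finite K] (h : Even (Nat.card K)) : -1 ∈ K := by
  have : Fact (Nat.Prime 2) := ⟨Nat.prime_two⟩
  obtain ⟨x, hx⟩ := exists_prime_orderOf_dvd_card' 2 (even_iff_two_dvd.1 h)
  have hsq : ((x : Rˣ) : R) ^ 2 = 1 := by
    rw [← Units.val_pow_eq_pow_val, ← K.coe_pow, ← hx, pow_orderOf_eq_one]; rfl
  have hne : ((x : Rˣ) : R) ≠ 1 := fun h1 => by
    rw [Units.val_eq_one, OneMemClass.coe_eq_one] at h1
    simp [h1] at hx
  have hx1 : (x : Rˣ) = -1 := Units.ext (by simpa using (sq_eq_one_iff.1 hsq).resolve_left hne)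
  exact hx1 ▸ x.2

section Kset

variable {F : Type*} [Field F] {ℓ : ℕ}

theorem coe_mem_Kset_iff (u : Fˣ) : (u : F) ∈ Kset F ℓ ↔ u ∈ (powMonoidHom ℓ : Fˣ →* Fˣ).range :=
  ⟨fun ⟨y, hy⟩ => ⟨y, Units.ext hy.symm⟩, fun ⟨y, hy⟩ => ⟨y, by rw [← hy]; rfl⟩⟩

theorem one_mem_Kset : (1 : F) ∈ Kset F ℓ := ⟨1, by simp⟩

theorem neg_mem_Kset {a : F} (hneg : (-1 : F) ∈ Kset F ℓ) (ha : a ∈ Kset F ℓ) :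
    -a ∈ Kset F ℓ := by
  obtain ⟨y, hy⟩ := hneg
  obtain ⟨z, rfl⟩ := ha
  exact ⟨y * z, by rw [mul_pow, Units.val_mul, ← hy, neg_one_mul]⟩

theorem card_range_powMonoidHom_units [Fintype F] (hℓ : ℓ ∣ Fintype.card F - 1) :
    Nat.card (powMonoidHom ℓ : Fˣ →* Fˣ).range = (Fintype.card F - 1) / ℓ := by
  rw [IsCyclic.card_powMonoidHom_range, Nat.card_units, Nat.card_eq_fintype_card,
    Nat.gcd_eq_right hℓ]

theorem neg_one_notMem_Kset_of_isDiffSet [Finite F] {lam : ℕ} (h2 : (2 : F) ≠ 0)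
    (hds : IsDiffSet (Kset F ℓ) lam) (hK : (powMonoidHom ℓ : Fˣ →* Fˣ).range ≠ ⊤) :
    (-1 : F) ∉ Kset F ℓ := by
  intro hneg1
  obtain ⟨u, hu⟩ : ∃ u, u ∉ (powMonoidHom ℓ : Fˣ →* Fˣ).range := by
    by_contra! h
    exact hK ((Subgroup.eq_top_iff' _).2 h)
  have hnegK : ∀ a ∈ Kset F ℓ, -a ∈ Kset F ℓ := fun _ => neg_mem_Kset hneg1
  have hodd : Odd lam := (hds.odd_iff_mem hnegK h2 one_ne_zero).2 one_mem_Kset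
  exact hu ((coe_mem_Kset_iff u).1 ((hds.odd_iff_mem hnegK h2 u.ne_zero).1 hodd))

end Kset

theorem diffSet_k_odd_ell_even_general {F : Type*} [Field F] [Fintype F] (ℓ : ℕ)
    (hℓ2 : 2 ≤ ℓ) (hodd : Odd (Fintype.card F)) (hℓ : ℓ ∣ Fintype.card F - 1)
    (k : ℕ) (hk : k = (Fintype.card F - 1) / ℓ)
    (lam : ℕ) (hds : IsDiffSet (Kset F ℓ) lam) :
    Odd k ∧ Even ℓ := by
  set K := (powMonoidHom ℓ : Fˣ →* Fˣ).range
  have hcard : Nat.card K = k := hk ▸ card_range_powMonoidHom_units hℓ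
  have hq : Even (Fintype.card F - 1) := hodd.tsub_odd odd_one
  have hkℓ : k * ℓ = Fintype.card F - 1 := hk ▸ Nat.div_mul_cancel hℓ
  have h2 : (2 : F) ≠ 0 :=
    Ring.two_ne_zero fun h => by
      simpa [Nat.odd_iff.1 hodd] using FiniteField.even_card_of_char_two h
  have hkpos : 0 < k :=
    Nat.pos_of_mul_pos_right (hkℓ ▸ Nat.sub_pos_of_lt Fintype.one_lt_card : 0 < k * ℓ)
  have hK : K ≠ ⊤ := by
    rw [Ne, ← Subgroup.card_eq_iff_eq_top, hcard, Nat.card_units, Nat.card_eq_fintype_card, ← hkℓ]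
    exact (lt_mul_of_one_lt_right hkpos hℓ2).ne
  have hneg1 := neg_one_notMem_Kset_of_isDiffSet h2 hds hK
  have hkodd : Odd k := by
    by_contra he
    rw [Nat.not_odd_iff_even] at he
    have hmem := (coe_mem_Kset_iff (-1)).2 (K.neg_one_mem_of_even_card (hcard ▸ he))
    exact hneg1 (by simpa using hmem)
  exact ⟨hkodd, (Nat.even_mul.1 (hkℓ ▸ hq)).resolve_left (Nat.not_even_iff_odd.2 hkodd)⟩

theorem diffSet_k_odd_ell_even {F : Type*} [Field F] [Fintype F] (ℓ : ℕ)
    (hℓ2 : 2 ≤ ℓ) (hodd : Odd (Fintype.card F)) (hℓ : ℓ ∣ Fintype.card F - 1)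
    (k : ℕ) (hk : k = (Fintype.card F - 1) / ℓ)
    (lam : ℕ) (hlam : 0 < lam) (hds : IsDiffSet (Kset F ℓ) lam) :
    Odd k ∧ Even ℓ :=
  diffSet_k_odd_ell_even_general ℓ hℓ2 hodd hℓ k hk lam hds
end

section
/- The sum over all 0 ≤ i, j ≤ ℓ-1 of the squares of the cyclotomic numbers (i, j) equals q + k(k-3), where k = (q-1)/ℓ. -/
/-- Cyclotomic number `(i, j)` with respect to generator `g` and divisor `ℓ`. -/
noncomputable def cyc {F : Type*} [Field F] [Fintype F] (g : Fˣ) (ℓ : ℕ) (i j : ℤ) : ℕ :=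
  Nat.card {x : F // (∃ y : Fˣ, x = 1 + ((g ^ i * y ^ ℓ : Fˣ) : F)) ∧
    ∃ z : Fˣ, x = ((g ^ j * z ^ ℓ : Fˣ) : F)}

/-!
`∑ (i, j)²` counts the pairs `(x, y)` lying in a common cell `(1 + g^i K) ∩ g^j K`, that is
`x, y ∉ {0, 1}` with `x / y ∈ K` and `(x - 1) / (y - 1) ∈ K`. The diagonal contributes `q - 2`.
Off the diagonal, `β = x / y` and `α = (x - 1) / (y - 1)` are distinct elements of `K \ {1}`, and
conversely every such `α ≠ β` comes from exactly one pair, namely `y = (1 - α) / (β - α)`,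
`x = β y`. Hence the sum is `q - 2 + (k - 1)(k - 2) = q + k(k - 3)`.
-/

open Finset

theorem sub_one_div_sub_one_of_sub_mul_eq {F : Type*} [Field F] {α β t : F} (hα : α ≠ 1)
    (hβ : β ≠ 1) (ht : (β - α) * t = 1 - α) : t ≠ 0 ∧ t ≠ 1 ∧ (β * t - 1) / (t - 1) = α := by
  have ht1 : t ≠ 1 := by
    rintro rfl
    exact hβ (by linear_combination ht)
  refine ⟨?_, ht1, ?_⟩
  · rintro rfl
    exact hα (by linear_combination ht)
  · rw [div_eq_iff (sub_ne_zero.2 ht1)]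
    linear_combination ht

section Cosets

variable {F : Type*} [Field F] [Fintype F] (K : Subgroup Fˣ)

open Classical in
noncomputable def unitCoset (c : Fˣ ⧸ K) : Finset F :=
  {x | ∃ u : Fˣ, (u : Fˣ ⧸ K) = c ∧ (u : F) = x}

open Classical in
/-- `(1 + a) ∩ b` for cosets `a, b` of `K`; the cyclotomic number `(i, j)` is the size of the cell
of `(g^i K, g^j K)` when `K` is the group of `ℓ`-th powers. -/
noncomputable def cyclotomicCell (a b : Fˣ ⧸ K) : Finset F :=
  {x | x - 1 ∈ unitCoset K a ∧ x ∈ unitCoset K b}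

open Classical in
noncomputable def sameCellPairs : Finset (F × F) :=
  {p | p.2 ≠ 0 ∧ p.2 ≠ 1 ∧ (p.1 - 1) / (p.2 - 1) ∈ unitCoset K 1 ∧ p.1 / p.2 ∈ unitCoset K 1}

variable {K}

theorem mem_unitCoset {c : Fˣ ⧸ K} {x : F} :
    x ∈ unitCoset K c ↔ ∃ u : Fˣ, (u : Fˣ ⧸ K) = c ∧ (u : F) = x := by
  simp [unitCoset]

theorem mem_cyclotomicCell {a b : Fˣ ⧸ K} {x : F} :
    x ∈ cyclotomicCell K a b ↔ x - 1 ∈ unitCoset K a ∧ x ∈ unitCoset K b := by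
  simp [cyclotomicCell]

theorem mem_sameCellPairs {p : F × F} : p ∈ sameCellPairs K ↔
    p.2 ≠ 0 ∧ p.2 ≠ 1 ∧ (p.1 - 1) / (p.2 - 1) ∈ unitCoset K 1 ∧ p.1 / p.2 ∈ unitCoset K 1 := by
  simp [sameCellPairs]

theorem coe_mem_unitCoset {c : Fˣ ⧸ K} (u : Fˣ) :
    (u : F) ∈ unitCoset K c ↔ (u : Fˣ ⧸ K) = c := by
  simp [mem_unitCoset, Units.val_injective.eq_iff]

theorem mk0_mem_unitCoset {x : F} (hx : x ≠ 0) :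
    x ∈ unitCoset K (Units.mk0 x hx : Fˣ ⧸ K) :=
  (coe_mem_unitCoset (Units.mk0 x hx)).2 rfl

theorem ne_zero_of_mem_unitCoset {c : Fˣ ⧸ K} {x : F} (hx : x ∈ unitCoset K c) : x ≠ 0 := by
  obtain ⟨u, -, rfl⟩ := mem_unitCoset.1 hx
  exact u.ne_zero

theorem one_mem_unitCoset_one : (1 : F) ∈ unitCoset K 1 := by
  simpa using coe_mem_unitCoset (K := K) (c := 1) 1

theorem card_unitCoset_one : #(unitCoset K 1) = Nat.card K := by
  classical
  have : unitCoset K 1 = (K : Set Fˣ).toFinset.map ⟨Units.val, Units.val_injective⟩ := by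
    ext x
    simp only [mem_unitCoset, QuotientGroup.eq_one_iff, mem_map, Set.mem_toFinset, SetLike.mem_coe,
      Function.Embedding.coeFn_mk]
  rw [this, card_map, Set.toFinset_card, Nat.card_eq_fintype_card]
  rfl

theorem mem_unitCoset_iff_div_mem {c : Fˣ ⧸ K} {x y : F} (hx : x ∈ unitCoset K c) :
    y ∈ unitCoset K c ↔ y / x ∈ unitCoset K 1 := by
  obtain ⟨u, rfl, rfl⟩ := mem_unitCoset.1 hx
  constructor
  · intro hy
    obtain ⟨v, hv, rfl⟩ := mem_unitCoset.1 hy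
    rw [← Units.val_div_eq_div_val, coe_mem_unitCoset, QuotientGroup.mk_div, hv, div_self']
  · intro hy
    have hy0 : y ≠ 0 := by simpa using ne_zero_of_mem_unitCoset hy
    rw [← Units.val_mk0 hy0, ← Units.val_div_eq_div_val, coe_mem_unitCoset, QuotientGroup.mk_div,
      div_eq_one] at hy
    rw [← Units.val_mk0 hy0, coe_mem_unitCoset, hy]

theorem disjoint_unitCoset {c c' : Fˣ ⧸ K} (h : c ≠ c') :
    Disjoint (unitCoset K c) (unitCoset K c') := by
  rw [disjoint_left]
  intro x hx hx'
  obtain ⟨u, rfl, rfl⟩ := mem_unitCoset.1 hx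
  exact h ((coe_mem_unitCoset u).1 hx')

theorem disjoint_cyclotomicCell {a b a' b' : Fˣ ⧸ K} (h : (a, b) ≠ (a', b')) :
    Disjoint (cyclotomicCell K a b) (cyclotomicCell K a' b') := by
  rw [disjoint_left]
  intro x hx hx'
  rw [mem_cyclotomicCell] at hx hx'
  rcases eq_or_ne a a' with rfl | ha
  · exact disjoint_left.1 (disjoint_unitCoset fun hb => h (by rw [hb])) hx.2 hx'.2
  · exact disjoint_left.1 (disjoint_unitCoset ha) hx.1 hx'.1

theorem mem_sameCellPairs_iff_exists {p : F × F} :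
    p ∈ sameCellPairs K ↔ ∃ a b, p.1 ∈ cyclotomicCell K a b ∧ p.2 ∈ cyclotomicCell K a b := by
  obtain ⟨x, y⟩ := p
  simp only [mem_sameCellPairs, mem_cyclotomicCell]
  constructor
  · rintro ⟨hy0, hy1, hx1, hx⟩
    have hy1 : y - 1 ≠ 0 := sub_ne_zero.2 hy1
    refine ⟨_, _, ⟨?_, ?_⟩, mk0_mem_unitCoset hy1, mk0_mem_unitCoset hy0⟩
    · exact (mem_unitCoset_iff_div_mem (mk0_mem_unitCoset hy1)).2 hx1
    · exact (mem_unitCoset_iff_div_mem (mk0_mem_unitCoset hy0)).2 hx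
  · rintro ⟨a, b, ⟨hx1, hx⟩, hy1, hy⟩
    refine ⟨ne_zero_of_mem_unitCoset hy, sub_ne_zero.1 (ne_zero_of_mem_unitCoset hy1),
      (mem_unitCoset_iff_div_mem hy1).1 hx1, (mem_unitCoset_iff_div_mem hy).1 hx⟩

theorem sum_sq_card_cyclotomicCell [Fintype (Fˣ ⧸ K)] :
    ∑ a, ∑ b, #(cyclotomicCell K a b) ^ 2 = #(sameCellPairs K) := by
  classical
  have hunion : sameCellPairs K = (univ : Finset ((Fˣ ⧸ K) × (Fˣ ⧸ K))).biUnion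
      fun c => cyclotomicCell K c.1 c.2 ×ˢ cyclotomicCell K c.1 c.2 := by
    ext p
    simp [mem_sameCellPairs_iff_exists]
  have hdisj : ((univ : Finset ((Fˣ ⧸ K) × (Fˣ ⧸ K))) : Set _).PairwiseDisjoint
      fun c : (Fˣ ⧸ K) × (Fˣ ⧸ K) => cyclotomicCell K c.1 c.2 ×ˢ cyclotomicCell K c.1 c.2 :=
    fun c _ c' _ h => disjoint_product.2 (Or.inl (disjoint_cyclotomicCell h))
  rw [hunion, card_biUnion hdisj, ← univ_product_univ, sum_product]
  simp only [card_product, sq]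

open Classical in
theorem card_filter_fst_eq_snd_sameCellPairs :
    #{p ∈ sameCellPairs K | p.1 = p.2} + 2 = Fintype.card F := by
  have h : {p ∈ sameCellPairs K | p.1 = p.2} = ({0, 1}ᶜ : Finset F).diag := by
    ext ⟨x, y⟩
    simp only [mem_filter, mem_sameCellPairs, mem_diag, mem_compl, mem_insert, mem_singleton]
    constructor
    · rintro ⟨⟨hy0, hy1, -⟩, rfl⟩
      exact ⟨by tauto, rfl⟩
    · rintro ⟨hx, rfl⟩
      have hx1 : x - 1 ≠ 0 := sub_ne_zero.2 (by tauto)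
      simp only [div_self hx1, div_self (show x ≠ 0 by tauto)]
      exact ⟨⟨by tauto, by tauto, one_mem_unitCoset_one, one_mem_unitCoset_one⟩, trivial⟩
  rw [h, diag_card, card_compl, card_pair zero_ne_one]
  have := Fintype.one_lt_card (α := F)
  omega

open Classical in
theorem card_filter_fst_ne_snd_sameCellPairs :
    #{p ∈ sameCellPairs K | p.1 ≠ p.2} = #((unitCoset K 1).erase 1).offDiag := by
  refine card_nbij' (fun p => ((p.1 - 1) / (p.2 - 1), p.1 / p.2))
    (fun c => (c.2 * ((1 - c.1) / (c.2 - c.1)), (1 - c.1) / (c.2 - c.1))) ?_ ?_ ?_ ?_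
  · rintro ⟨x, y⟩ hp
    simp only [coe_filter, mem_sameCellPairs, Set.mem_ofPred_eq] at hp
    obtain ⟨⟨hy0, hy1, hα, hβ⟩, hxy⟩ := hp
    have hy1 : y - 1 ≠ 0 := sub_ne_zero.2 hy1
    simp only [coe_offDiag, coe_erase, Set.mem_offDiag, Set.mem_sdiff, mem_coe,
      Set.mem_singleton_iff]
    refine ⟨⟨hα, ?_⟩, ⟨hβ, ?_⟩, ?_⟩
    · rw [div_eq_one_iff_eq hy1]; exact fun h => hxy (by linear_combination h)
    · rw [div_eq_one_iff_eq hy0]; exact hxy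
    · intro h
      rw [div_eq_div_iff hy1 hy0] at h
      exact hxy (by linear_combination h)
  · rintro ⟨α, β⟩ hc
    simp only [coe_offDiag, coe_erase, Set.mem_offDiag, Set.mem_sdiff, mem_coe,
      Set.mem_singleton_iff] at hc
    obtain ⟨⟨hα, hα1⟩, ⟨hβ, hβ1⟩, hαβ⟩ := hc
    obtain ⟨ht0, ht1, hαt⟩ := sub_one_div_sub_one_of_sub_mul_eq hα1 hβ1
      (mul_div_cancel₀ _ (sub_ne_zero.2 (Ne.symm hαβ)))
    simp only [coe_filter, mem_sameCellPairs, Set.mem_ofPred_eq]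
    refine ⟨⟨ht0, ht1, by rwa [hαt], ?_⟩, ?_⟩
    · rwa [mul_div_cancel_right₀ _ ht0]
    · exact fun h => hβ1 (mul_right_cancel₀ ht0 (h.trans (one_mul _).symm))
  · rintro ⟨x, y⟩ hp
    simp only [coe_filter, mem_sameCellPairs, Set.mem_ofPred_eq] at hp
    obtain ⟨⟨hy0, hy1, -, -⟩, hxy⟩ := hp
    have hy1 : y - 1 ≠ 0 := sub_ne_zero.2 hy1
    have hxy : y - x ≠ 0 := sub_ne_zero.2 (Ne.symm hxy)
    have ht : (1 - (x - 1) / (y - 1)) / (x / y - (x - 1) / (y - 1)) = y := by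
      rw [one_sub_div hy1, div_sub_div _ _ hy0 hy1, div_div_div_eq, div_eq_iff]
      · ring
      · exact mul_ne_zero hy1 (by rwa [show x * (y - 1) - y * (x - 1) = y - x by ring])
    simp only [ht, div_mul_cancel₀ x hy0]
  · rintro ⟨α, β⟩ hc
    simp only [coe_offDiag, coe_erase, Set.mem_offDiag, Set.mem_sdiff, mem_coe,
      Set.mem_singleton_iff] at hc
    obtain ⟨⟨-, hα1⟩, ⟨-, hβ1⟩, hαβ⟩ := hc
    obtain ⟨ht0, -, hαt⟩ := sub_one_div_sub_one_of_sub_mul_eq hα1 hβ1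
      (mul_div_cancel₀ _ (sub_ne_zero.2 (Ne.symm hαβ)))
    simp only [hαt, mul_div_cancel_right₀ _ ht0]

theorem card_sameCellPairs :
    (#(sameCellPairs K) : ℤ) = Fintype.card F - 2 + (Nat.card K - 1) * (Nat.card K - 2) := by
  classical
  have hdiag := card_filter_fst_eq_snd_sameCellPairs (K := K)
  have hoff := card_filter_fst_ne_snd_sameCellPairs (K := K)
  have herase : #((unitCoset K 1).erase 1) + 1 = Nat.card K := by
    rw [card_erase_add_one one_mem_unitCoset_one, card_unitCoset_one]
  rw [offDiag_card] at hoff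
  rw [← card_filter_add_card_filter_not (fun p : F × F => p.1 = p.2), Nat.cast_add, hoff,
    Nat.cast_sub (Nat.le_mul_self _), ← herase, ← hdiag]
  push_cast
  ring

end Cosets

theorem sum_range_card_pow_eq_sum {G M : Type*} [Group G] [Fintype G] [AddCommMonoid M] {a : G}
    (ha : ∀ x, x ∈ Subgroup.zpowers a) (f : G → M) :
    ∑ i ∈ range (Nat.card G), f (a ^ i) = ∑ x, f x := by
  classical
  rw [← IsCyclic.image_range_card ha, sum_image]
  rw [← orderOf_eq_card_of_forall_mem_zpowers ha, ← Nat.Iio_eq_range, coe_Iio]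
  exact pow_injOn_Iio_orderOf

section PowerResidues

variable {F : Type*} [Field F] [Fintype F]

theorem mem_unitCoset_powMonoidHom_range {ℓ : ℕ} {c : Fˣ} {x : F} :
    x ∈ unitCoset (powMonoidHom ℓ : Fˣ →* Fˣ).range (c : Fˣ ⧸ (powMonoidHom ℓ : Fˣ →* Fˣ).range) ↔
      ∃ y : Fˣ, x = ((c * y ^ ℓ : Fˣ) : F) := by
  simp only [mem_unitCoset, QuotientGroup.eq_iff_div_mem, MonoidHom.mem_range, powMonoidHom_apply]
  constructor
  · rintro ⟨u, ⟨y, hy⟩, rfl⟩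
    exact ⟨y, by rw [hy, mul_div_cancel]⟩
  · rintro ⟨y, rfl⟩
    exact ⟨c * y ^ ℓ, ⟨y, by rw [mul_div_cancel_left]⟩, rfl⟩

theorem cyc_eq_card_cyclotomicCell (g : Fˣ) (ℓ : ℕ) (i j : ℤ) :
    cyc g ℓ i j =
      #(cyclotomicCell (powMonoidHom ℓ : Fˣ →* Fˣ).range (g ^ i : Fˣ) (g ^ j : Fˣ)) := by
  rw [cyc, ← Nat.card_eq_finsetCard]
  refine Nat.card_congr (Equiv.subtypeEquivRight fun x => ?_)
  rw [mem_cyclotomicCell, mem_unitCoset_powMonoidHom_range, mem_unitCoset_powMonoidHom_range]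
  simp only [sub_eq_iff_eq_add']

end PowerResidues

theorem sum_sq_cyc_general {F : Type*} [Field F] [Fintype F] (g : Fˣ) (ℓ : ℕ)
    (hg : ∀ x : Fˣ, x ∈ Subgroup.zpowers g)
    (hℓ : ℓ ∣ Fintype.card F - 1)
    (k : ℕ) (hk : k = (Fintype.card F - 1) / ℓ) :
    ∑ i ∈ Finset.range ℓ, ∑ j ∈ Finset.range ℓ, (cyc g ℓ (i : ℤ) (j : ℤ) : ℤ) ^ 2 =
      (Fintype.card F : ℤ) + k * (k - 3) := by
  classical
  set K := (powMonoidHom ℓ : Fˣ →* Fˣ).range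
  have hunits : Nat.card Fˣ = Fintype.card F - 1 := by
    rw [Nat.card_eq_fintype_card, Fintype.card_units]
  have hcardK : Nat.card K = k := by
    rw [hk, IsCyclic.card_powMonoidHom_range, hunits, Nat.gcd_eq_right hℓ]
  have hcardQ : Nat.card (Fˣ ⧸ K) = ℓ := by
    rw [← Subgroup.index_eq_card, IsCyclic.index_powMonoidHom_range, hunits, Nat.gcd_eq_right hℓ]
  have hgen : ∀ c : Fˣ ⧸ K, c ∈ Subgroup.zpowers (g : Fˣ ⧸ K) := by
    intro c
    obtain ⟨u, rfl⟩ := QuotientGroup.mk_surjective c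
    obtain ⟨t, rfl⟩ := hg u
    exact ⟨t, rfl⟩
  have hsum (f : Fˣ ⧸ K → ℤ) : ∑ i ∈ range ℓ, f ((g : Fˣ ⧸ K) ^ i) = ∑ c, f c := by
    rw [← sum_range_card_pow_eq_sum hgen f, hcardQ]
  calc _ = ∑ a : Fˣ ⧸ K, ∑ b : Fˣ ⧸ K, (#(cyclotomicCell K a b) : ℤ) ^ 2 := by
        simp only [cyc_eq_card_cyclotomicCell, zpow_natCast, QuotientGroup.mk_pow]
        rw [hsum fun a => ∑ j ∈ range ℓ, (#(cyclotomicCell K a ((g : Fˣ ⧸ K) ^ j)) : ℤ) ^ 2]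
        exact sum_congr rfl fun a _ => hsum fun b => (#(cyclotomicCell K a b) : ℤ) ^ 2
    _ = #(sameCellPairs K) := by exact_mod_cast sum_sq_card_cyclotomicCell
    _ = Fintype.card F + k * (k - 3) := by rw [card_sameCellPairs, hcardK]; ring

theorem sum_sq_cyc {F : Type*} [Field F] [Fintype F] (g : Fˣ) (ℓ : ℕ)
    (hg : ∀ x : Fˣ, x ∈ Subgroup.zpowers g)
    (hodd : Odd (Fintype.card F)) (hℓ : ℓ ∣ Fintype.card F - 1)
    (k : ℕ) (hk : k = (Fintype.card F - 1) / ℓ) :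
    ∑ i ∈ Finset.range ℓ, ∑ j ∈ Finset.range ℓ, (cyc g ℓ (i : ℤ) (j : ℤ) : ℤ) ^ 2 =
      (Fintype.card F : ℤ) + k * (k - 3) :=
  sum_sq_cyc_general g ℓ hg hℓ k hk
end

section
/- For all integers i, j, u, v: Σ_{w=0}^{ℓ-1} (w-u, i-u)(w-v, j-v) = k(δ_{i,j} δ_{u,v} - δ_{i,u} δ_{j,v}) + Σ_{w=0}^{ℓ-1} (w-v, u-v)(w-j, i-j), where δ_{s,t} = 1 if s ≡ t (mod ℓ) and 0 otherwise, and k = (q-1)/ℓ. -/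
/-!
Write `C a = g ^ a K` (`cyclotomicClass g ℓ a`). The sum `∑ w, (w - u, a) (w - v, b)` counts
the pairs `(x, y)` with `x ∈ C a`, `y ∈ C b` and `(x - 1) / (y - 1) ∈ C (v - u)`
(`cyclotomicPairs g ℓ a b (v - u)`), the class of `x - 1` determining `w`. Off the diagonal
`x = y`, the involution `(x, y) ↦ (x (y - 1) / (y (x - 1)), (y - 1) / (x - 1))` (`crossSwap`)
carries these pairs for the classes `(a, b, c)` onto those for `(a - b - c, -c, -b)`, and the
latter are exactly the pairs counted by the right-hand sum. The diagonal consists of the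
`x ∈ C a ∩ C b`, `x ≠ 1`, and is nonempty only if `1 ∈ C c`; comparing the two diagonal counts
gives the `δ`-term.
-/

open Finset

section

open scoped Classical

variable {F : Type*} [Field F]

def cyclotomicClass (g : Fˣ) (ℓ : ℕ) (a : ℤ) : Set F :=
  {x | ∃ y : Fˣ, x = ((g ^ a * y ^ ℓ : Fˣ) : F)}

section Class

variable {g : Fˣ} {ℓ : ℕ} {a b : ℤ} {x y : F}

lemma ne_zero_of_mem_cyclotomicClass (hx : x ∈ cyclotomicClass g ℓ a) : x ≠ 0 := by
  obtain ⟨y, rfl⟩ := hx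
  exact Units.ne_zero _

lemma mul_mem_cyclotomicClass (hx : x ∈ cyclotomicClass g ℓ a)
    (hy : y ∈ cyclotomicClass g ℓ b) : x * y ∈ cyclotomicClass g ℓ (a + b) := by
  obtain ⟨s, rfl⟩ := hx
  obtain ⟨t, rfl⟩ := hy
  exact ⟨s * t, by rw [← Units.val_mul, zpow_add, mul_pow, mul_mul_mul_comm]⟩

lemma inv_mem_cyclotomicClass (hx : x ∈ cyclotomicClass g ℓ a) :
    x⁻¹ ∈ cyclotomicClass g ℓ (-a) := by
  obtain ⟨s, rfl⟩ := hx
  exact ⟨s⁻¹, by rw [← Units.val_inv_eq_inv_val, zpow_neg, inv_pow, mul_inv]⟩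

lemma div_mem_cyclotomicClass (hx : x ∈ cyclotomicClass g ℓ a)
    (hy : y ∈ cyclotomicClass g ℓ b) : x / y ∈ cyclotomicClass g ℓ (a - b) := by
  simpa only [div_eq_mul_inv, sub_eq_add_neg] using
    mul_mem_cyclotomicClass hx (inv_mem_cyclotomicClass hy)

lemma cyclotomicClass_eq_of_dvd_sub (h : (ℓ : ℤ) ∣ a - b) :
    cyclotomicClass g ℓ a = cyclotomicClass (F := F) g ℓ b := by
  obtain ⟨m, hm⟩ := h
  ext x
  constructor
  · rintro ⟨y, rfl⟩
    refine ⟨g ^ m * y, ?_⟩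
    rw [mul_pow, ← zpow_natCast (g ^ m), ← zpow_mul, ← mul_assoc, ← zpow_add,
      show b + m * ℓ = a by linarith]
  · rintro ⟨y, rfl⟩
    refine ⟨g ^ (-m) * y, ?_⟩
    rw [mul_pow, ← zpow_natCast (g ^ (-m)), ← zpow_mul, ← mul_assoc, ← zpow_add,
      show a + -m * ℓ = b by linarith]

lemma exists_mem_cyclotomicClass (hg : ∀ x : Fˣ, x ∈ Subgroup.zpowers g) (hx : x ≠ 0) :
    ∃ a, x ∈ cyclotomicClass g ℓ a := by
  obtain ⟨a, ha⟩ := Subgroup.mem_zpowers_iff.mp (hg (Units.mk0 x hx))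
  exact ⟨a, 1, by simp [ha]⟩

variable [Fintype F]

lemma one_mem_cyclotomicClass_iff (hg : ∀ x : Fˣ, x ∈ Subgroup.zpowers g)
    (hℓ : ℓ ∣ Fintype.card F - 1) : (1 : F) ∈ cyclotomicClass g ℓ a ↔ (ℓ : ℤ) ∣ a := by
  constructor
  · rintro ⟨y, hy⟩
    obtain ⟨m, rfl⟩ := Subgroup.mem_zpowers_iff.mp (hg y)
    have hg1 : g ^ (a + m * ℓ) = 1 := by
      rw [zpow_add, zpow_mul, zpow_natCast]
      exact Units.val_eq_one.mp hy.symm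
    have horder : orderOf g = Fintype.card F - 1 := by
      rw [orderOf_eq_card_of_forall_mem_zpowers hg, Nat.card_units, Nat.card_eq_fintype_card]
    have : (ℓ : ℤ) ∣ a + m * ℓ :=
      (Int.natCast_dvd_natCast.mpr (horder ▸ hℓ)).trans (orderOf_dvd_iff_zpow_eq_one.mpr hg1)
    simpa using this
  · rintro ⟨m, rfl⟩
    exact ⟨g ^ (-m), by rw [← zpow_natCast (g ^ (-m)), ← zpow_mul, ← zpow_add,
      show (ℓ : ℤ) * m + -m * ℓ = 0 by ring, zpow_zero, Units.val_one]⟩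

lemma dvd_sub_of_mem_cyclotomicClass (hg : ∀ x : Fˣ, x ∈ Subgroup.zpowers g)
    (hℓ : ℓ ∣ Fintype.card F - 1) (ha : x ∈ cyclotomicClass g ℓ a)
    (hb : x ∈ cyclotomicClass g ℓ b) : (ℓ : ℤ) ∣ a - b := by
  have h := div_mem_cyclotomicClass ha hb
  rwa [div_self (ne_zero_of_mem_cyclotomicClass ha), one_mem_cyclotomicClass_iff hg hℓ] at h

variable (g a) in
lemma card_cyclotomicClass (hℓ : ℓ ∣ Fintype.card F - 1) :
    #{x | x ∈ cyclotomicClass g ℓ a} = (Fintype.card F - 1) / ℓ := by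
  have himage : cyclotomicClass g ℓ a =
      (fun y : Fˣ => ((g ^ a * y : Fˣ) : F)) '' ((powMonoidHom ℓ : Fˣ →* Fˣ).range : Set Fˣ) := by
    ext x
    simp [cyclotomicClass, eq_comm]
  have hinj : Function.Injective fun y : Fˣ => ((g ^ a * y : Fˣ) : F) :=
    Units.val_injective.comp (mul_right_injective _)
  rw [Set.filter_mem_univ_eq_toFinset, ← Set.ncard_eq_toFinset_card', himage,
    Set.ncard_image_of_injective _ hinj, ← Nat.card_coe_set_eq, SetLike.coe_sort_coe,
    IsCyclic.card_powMonoidHom_range, Nat.card_units, Nat.card_eq_fintype_card,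
    Nat.gcd_eq_right hℓ]

end Class

section Pairs

variable [Fintype F] {g : Fˣ} {ℓ : ℕ}

variable (g ℓ) in
lemma cyc_eq_card (s a : ℤ) :
    cyc g ℓ s a = #{x | x - 1 ∈ cyclotomicClass g ℓ s ∧ x ∈ cyclotomicClass g ℓ a} := by
  rw [cyc, Nat.card_eq_fintype_card, Fintype.card_subtype]
  simp only [cyclotomicClass, Set.mem_ofPred_eq, sub_eq_iff_eq_add']

variable (g ℓ) in
noncomputable def cyclotomicPairs (a b c : ℤ) : Finset (F × F) :=
  {p | p.1 ∈ cyclotomicClass g ℓ a ∧ p.2 ∈ cyclotomicClass g ℓ b ∧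
    (p.1 - 1) / (p.2 - 1) ∈ cyclotomicClass g ℓ c}

lemma sum_cyc_mul_cyc (hg : ∀ x : Fˣ, x ∈ Subgroup.zpowers g) (hℓ : ℓ ∣ Fintype.card F - 1)
    (u v a b : ℤ) :
    ∑ w ∈ range ℓ, cyc g ℓ (w - u) a * cyc g ℓ (w - v) b = #(cyclotomicPairs g ℓ a b (v - u)) := by
  have hℓ0 : (0 : ℤ) < ℓ := by
    have := Fintype.one_lt_card (α := F)
    exact_mod_cast Nat.pos_of_dvd_of_pos hℓ (by omega)
  have hunion : cyclotomicPairs g ℓ a b (v - u) = (range ℓ).biUnion fun w : ℕ =>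
      ({x | x - 1 ∈ cyclotomicClass g ℓ (w - u) ∧ x ∈ cyclotomicClass g ℓ a} : Finset F) ×ˢ
      ({y | y - 1 ∈ cyclotomicClass g ℓ (w - v) ∧ y ∈ cyclotomicClass g ℓ b} : Finset F) := by
    ext ⟨x, y⟩
    simp only [cyclotomicPairs, mem_filter, mem_univ, true_and, mem_biUnion, mem_range,
      mem_product]
    constructor
    · rintro ⟨hx, hy, hxy⟩
      have hx1 : x - 1 ≠ 0 := fun h => ne_zero_of_mem_cyclotomicClass hxy (by simp [h])
      obtain ⟨m, hm⟩ := exists_mem_cyclotomicClass (ℓ := ℓ) hg hx1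
      -- `w` is the residue of the class of `x - 1`, shifted by `u`
      have hmod := Int.emod_nonneg (m + u) hℓ0.ne'
      have hmod' := Int.emod_lt_of_pos (m + u) hℓ0
      have hw : ((((m + u) % ℓ).toNat : ℕ) : ℤ) = (m + u) % ℓ := Int.toNat_of_nonneg hmod
      have hxw : x - 1 ∈ cyclotomicClass g ℓ ((((m + u) % ℓ).toNat : ℕ) - u) := by
        rwa [cyclotomicClass_eq_of_dvd_sub (b := m)
          ⟨-((m + u) / ℓ), by rw [hw, Int.emod_def]; ring⟩]
      refine ⟨((m + u) % ℓ).toNat, by omega, ⟨hxw, hx⟩, ?_, hy⟩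
      have hy1 := div_mem_cyclotomicClass hxw hxy
      rwa [div_div_cancel₀ hx1, sub_sub_sub_cancel_right] at hy1
    · rintro ⟨w, -, ⟨hxw, hx⟩, hyw, hy⟩
      refine ⟨hx, hy, ?_⟩
      simpa using div_mem_cyclotomicClass hxw hyw
  rw [hunion, card_biUnion]
  · simp only [card_product, cyc_eq_card]
  · intro w hw w' hw' hne
    refine disjoint_left.mpr fun p hp hp' => hne ?_
    simp only [coe_range, Set.mem_Iio, mem_product, mem_filter] at hw hw' hp hp'
    have := dvd_sub_of_mem_cyclotomicClass hg hℓ hp.1.2.1 hp'.1.2.1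
    rw [sub_sub_sub_cancel_right] at this
    have := Int.eq_zero_of_abs_lt_dvd this (by rw [abs_lt]; omega)
    omega

end Pairs

section CrossSwap

def crossSwap (p : F × F) : F × F :=
  (p.1 * (p.2 - 1) / (p.2 * (p.1 - 1)), (p.2 - 1) / (p.1 - 1))

variable {x y : F}

lemma crossSwap_snd_sub_one (hx : x ≠ 1) : (crossSwap (x, y)).2 - 1 = (y - x) / (x - 1) := by
  have : x - 1 ≠ 0 := sub_ne_zero.mpr hx
  simp only [crossSwap]
  field_simp
  ring

lemma crossSwap_fst_sub_one (hx : x ≠ 1) (hy : y ≠ 0) :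
    (crossSwap (x, y)).1 - 1 = (y - x) / (y * (x - 1)) := by
  have : x - 1 ≠ 0 := sub_ne_zero.mpr hx
  simp only [crossSwap]
  field_simp
  ring

lemma crossSwap_fst_sub_one_div (hx : x ≠ 1) (hy : y ≠ 0) (hxy : x ≠ y) :
    ((crossSwap (x, y)).1 - 1) / ((crossSwap (x, y)).2 - 1) = y⁻¹ := by
  have : x - 1 ≠ 0 := sub_ne_zero.mpr hx
  have : y - x ≠ 0 := sub_ne_zero.mpr hxy.symm
  rw [crossSwap_fst_sub_one hx hy, crossSwap_snd_sub_one hx]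
  field_simp

lemma crossSwap_fst_div_snd (hx : x ≠ 1) (hy : y ≠ 1) :
    (crossSwap (x, y)).1 / (crossSwap (x, y)).2 = x / y := by
  have : x - 1 ≠ 0 := sub_ne_zero.mpr hx
  have : y - 1 ≠ 0 := sub_ne_zero.mpr hy
  simp only [crossSwap]
  field_simp

lemma crossSwap_crossSwap (hx : x ≠ 1) (hy0 : y ≠ 0) (hy1 : y ≠ 1) (hxy : x ≠ y) :
    crossSwap (crossSwap (x, y)) = (x, y) := by
  have hswap (p : F × F) : crossSwap p = (p.1 / p.2 * ((p.1 - 1) / (p.2 - 1))⁻¹,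
      ((p.1 - 1) / (p.2 - 1))⁻¹) := by
    rw [inv_div, div_mul_div_comm]
    rfl
  rw [hswap, crossSwap_fst_div_snd hx hy1, crossSwap_fst_sub_one_div hx hy0 hxy, inv_inv,
    div_mul_cancel₀ x hy0]

end CrossSwap

section Counting

variable [Fintype F] {g : Fˣ} {ℓ : ℕ} {a b c : ℤ}

lemma mem_cyclotomicPairs {p : F × F} : p ∈ cyclotomicPairs g ℓ a b c ↔
    p.1 ∈ cyclotomicClass g ℓ a ∧ p.2 ∈ cyclotomicClass g ℓ b ∧
      (p.1 - 1) / (p.2 - 1) ∈ cyclotomicClass g ℓ c := by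
  simp [cyclotomicPairs]

lemma ne_one_of_mem_cyclotomicPairs {p : F × F} (hp : p ∈ cyclotomicPairs g ℓ a b c) :
    p.1 ≠ 1 ∧ p.2 ≠ 1 := by
  have h := ne_zero_of_mem_cyclotomicClass (mem_cyclotomicPairs.mp hp).2.2
  exact ⟨fun h1 => h (by simp [h1]), fun h2 => h (by simp [h2])⟩

lemma crossSwap_mem_cyclotomicPairs {p : F × F} (hp : p ∈ cyclotomicPairs g ℓ a b c)
    (hne : p.1 ≠ p.2) : crossSwap p ∈ cyclotomicPairs g ℓ (a - b - c) (-c) (-b) ∧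
      (crossSwap p).1 ≠ (crossSwap p).2 := by
  obtain ⟨x, y⟩ := p
  obtain ⟨hx1, hy1⟩ := ne_one_of_mem_cyclotomicPairs hp
  obtain ⟨hx, hy, hxy⟩ := mem_cyclotomicPairs.mp hp
  have hy0 := ne_zero_of_mem_cyclotomicClass hy
  have hY : (crossSwap (x, y)).2 ∈ cyclotomicClass g ℓ (-c) := by
    simpa [crossSwap] using inv_mem_cyclotomicClass hxy
  have hY0 := ne_zero_of_mem_cyclotomicClass hY
  have hXY := crossSwap_fst_div_snd hx1 hy1
  have hX : (crossSwap (x, y)).1 ∈ cyclotomicClass g ℓ (a - b - c) := by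
    rw [← div_mul_cancel₀ (crossSwap (x, y)).1 hY0, hXY, sub_eq_add_neg _ c]
    exact mul_mem_cyclotomicClass (div_mem_cyclotomicClass hx hy) hY
  refine ⟨mem_cyclotomicPairs.mpr ⟨hX, hY, ?_⟩, fun h => hne ?_⟩
  · rw [crossSwap_fst_sub_one_div hx1 hy0 hne]
    exact inv_mem_cyclotomicClass hy
  · rwa [h, div_self hY0, eq_comm, div_eq_one_iff_eq hy0] at hXY

lemma card_offDiag_cyclotomicPairs :
    #{p ∈ cyclotomicPairs g ℓ a b c | p.1 ≠ p.2} =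
      #{p ∈ cyclotomicPairs g ℓ (a - b - c) (-c) (-b) | p.1 ≠ p.2} := by
  have hmaps (a b c : ℤ) : Set.MapsTo (crossSwap (F := F))
      ((cyclotomicPairs g ℓ a b c).filter fun p => p.1 ≠ p.2)
      ((cyclotomicPairs g ℓ (a - b - c) (-c) (-b)).filter fun p => p.1 ≠ p.2) := fun p hp => by
    rw [coe_filter] at hp ⊢
    exact crossSwap_mem_cyclotomicPairs hp.1 hp.2
  have hinv (a b c : ℤ) : Set.LeftInvOn (crossSwap (F := F)) crossSwap
      ((cyclotomicPairs g ℓ a b c).filter fun p => p.1 ≠ p.2) := fun p hp => by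
    rw [coe_filter] at hp
    obtain ⟨hx1, hy1⟩ := ne_one_of_mem_cyclotomicPairs hp.1
    exact crossSwap_crossSwap hx1
      (ne_zero_of_mem_cyclotomicClass (mem_cyclotomicPairs.mp hp.1).2.1) hy1 hp.2
  refine card_nbij' crossSwap crossSwap (hmaps a b c) ?_ (hinv a b c) (hinv _ _ _)
  simpa only [sub_neg_eq_add, sub_add_cancel, neg_neg] using hmaps (a - b - c) (-c) (-b)

lemma card_diag_cyclotomicPairs_eq_card :
    #{p ∈ cyclotomicPairs g ℓ a b c | p.1 = p.2} =
      #{x | x ∈ cyclotomicClass g ℓ a ∧ x ∈ cyclotomicClass g ℓ b ∧ x ≠ 1 ∧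
        (1 : F) ∈ cyclotomicClass g ℓ c} := by
  refine card_nbij' Prod.fst (fun x => (x, x)) ?_ ?_ ?_ fun x _ => rfl
  · rintro ⟨x, y⟩ hp
    simp only [mem_coe, mem_filter, mem_univ, true_and] at hp ⊢
    obtain ⟨hp, rfl⟩ := hp
    obtain ⟨hx1, -⟩ := ne_one_of_mem_cyclotomicPairs hp
    obtain ⟨hx, hy, hxy⟩ := mem_cyclotomicPairs.mp hp
    rw [div_self (sub_ne_zero.mpr hx1)] at hxy
    exact ⟨hx, hy, hx1, hxy⟩
  · intro x hx
    simp only [mem_coe, mem_filter, mem_univ, true_and] at hx ⊢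
    obtain ⟨hxa, hxb, hx1, h1⟩ := hx
    refine ⟨mem_cyclotomicPairs.mpr ⟨hxa, hxb, ?_⟩, trivial⟩
    rwa [div_self (sub_ne_zero.mpr hx1)]
  · rintro ⟨x, y⟩ hp
    simp only [mem_coe, mem_filter] at hp
    rw [hp.2]

lemma card_diag_cyclotomicPairs (hg : ∀ x : Fˣ, x ∈ Subgroup.zpowers g)
    (hℓ : ℓ ∣ Fintype.card F - 1) :
    (#{p ∈ cyclotomicPairs g ℓ a b c | p.1 = p.2} : ℤ) =
      if (ℓ : ℤ) ∣ c ∧ (ℓ : ℤ) ∣ a - b then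
        (((Fintype.card F - 1) / ℓ : ℕ) : ℤ) - if (ℓ : ℤ) ∣ a then 1 else 0
      else 0 := by
  rw [card_diag_cyclotomicPairs_eq_card]
  by_cases h : (ℓ : ℤ) ∣ c ∧ (ℓ : ℤ) ∣ a - b
  · have hset : ({x | x ∈ cyclotomicClass g ℓ a ∧ x ∈ cyclotomicClass g ℓ b ∧ x ≠ 1 ∧
        (1 : F) ∈ cyclotomicClass g ℓ c} : Finset F) =
        ({x | x ∈ cyclotomicClass g ℓ a} : Finset F).erase 1 := by
      ext x
      simp [← cyclotomicClass_eq_of_dvd_sub h.2, (one_mem_cyclotomicClass_iff hg hℓ).mpr h.1,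
        and_comm]
    rw [if_pos h, hset, ← card_cyclotomicClass g a hℓ]
    split_ifs with ha
    · exact cast_card_erase_of_mem (by simpa [one_mem_cyclotomicClass_iff hg hℓ] using ha)
    · rw [erase_eq_of_notMem (by simpa [one_mem_cyclotomicClass_iff hg hℓ] using ha), sub_zero]
  · rw [if_neg h, Nat.cast_eq_zero, card_eq_zero, filter_eq_empty_iff]
    rintro x - ⟨hxa, hxb, -, h1⟩
    exact h ⟨(one_mem_cyclotomicClass_iff hg hℓ).mp h1,
      dvd_sub_of_mem_cyclotomicClass hg hℓ hxa hxb⟩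

lemma card_cyclotomicPairs_eq (hg : ∀ x : Fˣ, x ∈ Subgroup.zpowers g)
    (hℓ : ℓ ∣ Fintype.card F - 1) :
    (#(cyclotomicPairs g ℓ a b c) : ℤ) =
      (((Fintype.card F - 1) / ℓ : ℕ) : ℤ) *
        ((if (ℓ : ℤ) ∣ a - b ∧ (ℓ : ℤ) ∣ c then 1 else 0) -
          if (ℓ : ℤ) ∣ a ∧ (ℓ : ℤ) ∣ b then 1 else 0) +
      #(cyclotomicPairs g ℓ (a - b - c) (-c) (-b)) := by
  have hsplit (a b c : ℤ) : #{p ∈ cyclotomicPairs g ℓ a b c | p.1 = p.2} +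
      #{p ∈ cyclotomicPairs g ℓ a b c | p.1 ≠ p.2} = #(cyclotomicPairs g ℓ a b c) :=
    card_filter_add_card_filter_not _
  rw [← hsplit, ← hsplit, card_offDiag_cyclotomicPairs, Nat.cast_add, Nat.cast_add,
    card_diag_cyclotomicPairs hg hℓ, card_diag_cyclotomicPairs hg hℓ]
  simp only [dvd_neg, sub_neg_eq_add, sub_add_cancel]
  set k : ℤ := (((Fintype.card F - 1) / ℓ : ℕ) : ℤ)
  by_cases hab : (ℓ : ℤ) ∣ a - b
  · have hb : (ℓ : ℤ) ∣ a ↔ (ℓ : ℤ) ∣ b :=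
      ⟨fun h => by simpa using dvd_sub h hab, fun h => by simpa using dvd_add hab h⟩
    have hc : (ℓ : ℤ) ∣ a - b - c ↔ (ℓ : ℤ) ∣ c := dvd_sub_right hab
    simp only [hab, hb, hc, and_true, true_and, and_self]
    split_ifs <;> ring
  · have hab' : ¬ ((ℓ : ℤ) ∣ a ∧ (ℓ : ℤ) ∣ b) := fun h => hab (dvd_sub h.1 h.2)
    simp [hab, hab']

end Counting

end

theorem cyc_product_identity_general {F : Type*} [Field F] [Fintype F] (g : Fˣ) (ℓ : ℕ)
    (hg : ∀ x : Fˣ, x ∈ Subgroup.zpowers g)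
    (hℓ : ℓ ∣ Fintype.card F - 1)
    (k : ℕ) (hk : k = (Fintype.card F - 1) / ℓ)
    (δ : ℤ → ℤ → ℤ) (hδ : ∀ s t : ℤ, δ s t = if (s - t) % (ℓ : ℤ) = 0 then 1 else 0)
    (i j u v : ℤ) :
    ∑ w ∈ Finset.range ℓ,
        (cyc g ℓ ((w : ℤ) - u) (i - u) : ℤ) * (cyc g ℓ ((w : ℤ) - v) (j - v) : ℤ) =
      (k : ℤ) * (δ i j * δ u v - δ i u * δ j v) +
      ∑ w ∈ Finset.range ℓ,
        (cyc g ℓ ((w : ℤ) - v) (u - v) : ℤ) * (cyc g ℓ ((w : ℤ) - j) (i - j) : ℤ) := by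
  have hsum (u v a b : ℤ) : ∑ w ∈ range ℓ, (cyc g ℓ (w - u) a : ℤ) * cyc g ℓ (w - v) b =
      #(cyclotomicPairs g ℓ a b (v - u)) := by
    exact_mod_cast sum_cyc_mul_cyc hg hℓ u v a b
  have hδ' (s t : ℤ) : δ s t = if (ℓ : ℤ) ∣ s - t then 1 else 0 := by
    simp only [hδ, Int.dvd_iff_emod_eq_zero]
  have hδδ : ((ℓ : ℤ) ∣ i - u - (j - v) ∧ (ℓ : ℤ) ∣ v - u) ↔
      ((ℓ : ℤ) ∣ i - j ∧ (ℓ : ℤ) ∣ u - v) := by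
    rw [dvd_sub_comm (b := v), show i - u - (j - v) = i - j - (u - v) by ring]
    exact and_congr_left dvd_sub_left
  simp_rw [mul_comm (cyc g ℓ (_ - v) (u - v) : ℤ)]
  rw [hsum, hsum, card_cyclotomicPairs_eq hg hℓ, ← hk, neg_sub, neg_sub,
    show i - u - (j - v) - (v - u) = i - j by ring]
  simp only [hδ', ite_zero_mul_ite_zero, mul_one, hδδ]

theorem cyc_product_identity {F : Type*} [Field F] [Fintype F] (g : Fˣ) (ℓ : ℕ)
    (hg : ∀ x : Fˣ, x ∈ Subgroup.zpowers g)
    (hodd : Odd (Fintype.card F)) (hℓ : ℓ ∣ Fintype.card F - 1)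
    (k : ℕ) (hk : k = (Fintype.card F - 1) / ℓ)
    (δ : ℤ → ℤ → ℤ) (hδ : ∀ s t : ℤ, δ s t = if (s - t) % (ℓ : ℤ) = 0 then 1 else 0)
    (i j u v : ℤ) :
    ∑ w ∈ Finset.range ℓ,
        (cyc g ℓ ((w : ℤ) - u) (i - u) : ℤ) * (cyc g ℓ ((w : ℤ) - v) (j - v) : ℤ) =
      (k : ℤ) * (δ i j * δ u v - δ i u * δ j v) +
      ∑ w ∈ Finset.range ℓ,
        (cyc g ℓ ((w : ℤ) - v) (u - v) : ℤ) * (cyc g ℓ ((w : ℤ) - j) (i - j) : ℤ) :=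
  cyc_product_identity_general g ℓ hg hℓ k hk δ hδ i j u v
end

section
/- If K is a (q, k, λ)-difference set with λ odd and ℓ ≡ 0 (mod 8), then λ ≡ 1 (mod 4). -/
open Finset

theorem Int.eight_dvd_sum_sq_sub_card {ι : Type*} {s : Finset ι} {a : ι → ℤ}
    (ha : ∀ i ∈ s, Odd (a i)) : 8 ∣ ∑ i ∈ s, a i ^ 2 - #s := by
  have h : ∑ i ∈ s, a i ^ 2 - #s = ∑ i ∈ s, (a i ^ 2 - 1) := by
    rw [sum_sub_distrib, sum_const, nsmul_one]
  exact h ▸ dvd_sum fun i hi => Int.eight_dvd_sq_sub_one_of_odd (ha i hi)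

theorem Finset.even_card_of_involution {α : Type*} {s : Finset α} (f : α → α)
    (hf : ∀ a ∈ s, f a ∈ s) (hff : ∀ a ∈ s, f (f a) = a) (hfix : ∀ a ∈ s, f a ≠ a) :
    Even #s := by
  rw [← ZMod.natCast_eq_zero_iff_even, card_eq_sum_ones, Nat.cast_sum, Nat.cast_one]
  exact sum_involution (fun a _ => f a) (fun _ _ => by decide) (fun a ha _ => hfix a ha) hf hff

theorem Fintype.sum_card_fiber_sq {α β : Type*} [Fintype α] [Fintype β] [DecidableEq β]
    (f : α → β) : ∑ b, #{a | f a = b} ^ 2 = #{p : α × α | f p.1 = f p.2} := by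
  rw [card_eq_sum_card_fiberwise (f := fun p : α × α => f p.1) (t := univ) fun _ _ => mem_univ _]
  refine Finset.sum_congr rfl fun b _ => ?_
  rw [sq, ← card_product, filter_filter]
  congr 1
  ext p
  simp only [mem_product, mem_filter, mem_univ, true_and]
  grind

theorem Subgroup.neg_one_notMem_of_odd_card {R : Type*} [Ring R] [Nontrivial R]
    (hR : ringChar R ≠ 2) {H : Subgroup Rˣ} (hH : Odd (Nat.card H)) : (-1 : Rˣ) ∉ H := by
  intro h
  have h2 := H.orderOf_dvd_natCard h
  rw [← orderOf_units, Units.val_neg, Units.val_one, orderOf_neg_one, if_neg hR] at h2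
  exact Nat.not_even_iff_odd.mpr hH (even_iff_two_dvd.mpr h2)

section DiffSet

variable {F : Type*} [Field F] [Fintype F] [DecidableEq F] {D : Set F} [DecidablePred (· ∈ D)]
  {lam : ℕ}

theorem IsDiffSet.card_filter_eq (hD : IsDiffSet D lam) {z : F} (hz : z ≠ 0) :
    #{p : F × F | p.1 ∈ D ∧ p.2 ∈ D ∧ p.1 - p.2 = z} = lam := by
  rw [← hD z hz, Nat.card_eq_fintype_card, Fintype.card_subtype]

theorem IsDiffSet.card_mul_card_sub_one (hD : IsDiffSet D lam) :
    Nat.card D * (Nat.card D - 1) = (Nat.card F - 1) * lam := by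
  set s : Finset F := {a | a ∈ D}
  have hs : Nat.card D = #s := by
    rw [Nat.card_eq_fintype_card, Fintype.card_subtype]
  have hfiber : ∀ z ∈ univ.erase (0 : F), #{p ∈ s.offDiag | p.1 - p.2 = z} = lam := by
    intro z hz
    rw [← hD.card_filter_eq (ne_of_mem_erase hz)]
    congr 1
    ext p
    simp only [s, mem_filter, mem_offDiag, mem_univ, true_and]
    constructor
    · rintro ⟨⟨h1, h2, -⟩, h⟩
      exact ⟨h1, h2, h⟩
    · rintro ⟨h1, h2, h⟩
      exact ⟨⟨h1, h2, fun he => ne_of_mem_erase hz (by rw [← h, he, sub_self])⟩, h⟩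
  rw [hs, Nat.mul_sub_one, ← offDiag_card,
    card_eq_sum_card_fiberwise (f := fun p : F × F => p.1 - p.2) (t := univ.erase 0)
      fun p hp => mem_erase.mpr ⟨sub_ne_zero.mpr (mem_offDiag.mp hp).2.2, mem_univ _⟩,
    sum_congr rfl hfiber, sum_const, card_erase_of_mem (mem_univ _), card_univ,
    Nat.card_eq_fintype_card, smul_eq_mul]

end DiffSet

section Cyclotomy

open scoped Classical

theorem Subgroup.card_filter_eq_mul {G : Type*} [CommGroup G] [Fintype G] (H : Subgroup G)
    (u v : G) : #{t : H | u = t * v} = if (u : G ⧸ H) = v then 1 else 0 := by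
  split_ifs with h
  · rw [Finset.card_eq_one]
    refine ⟨⟨v⁻¹ * u, QuotientGroup.eq.mp h.symm⟩, ?_⟩
    ext t
    simp only [mem_filter, mem_univ, true_and, mem_singleton, ← Subtype.coe_inj]
    rw [eq_inv_mul_iff_mul_eq, mul_comm, eq_comm]
  · rw [Finset.card_eq_zero, filter_eq_empty_iff]
    rintro t - rfl
    exact h (by rw [mul_comm, QuotientGroup.mk_mul_of_mem _ t.2])

variable {F : Type*} [Field F]

/-- `0` goes to the junk value `1`. -/
noncomputable def toUnit (a : F) : Fˣ := if h : a = 0 then 1 else Units.mk0 a h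

theorem val_toUnit {a : F} (ha : a ≠ 0) : (toUnit a : F) = a := by
  simp [toUnit, ha]

theorem toUnit_val (u : Fˣ) : toUnit (u : F) = u :=
  Units.ext (val_toUnit u.ne_zero)

variable {H : Subgroup Fˣ} {lam : ℕ}

theorem val_add_one_ne_zero (hneg : (-1 : Fˣ) ∉ H) (x : H) : ((x : Fˣ) : F) + 1 ≠ 0 := by
  intro h
  have hx : (x : Fˣ) = -1 := Units.ext (by simpa using eq_neg_of_add_eq_zero_left h)
  exact hneg (hx ▸ x.2)

theorem mk_toUnit_eq_one_iff {a : F} (ha : a ≠ 0) :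
    (toUnit a : Fˣ ⧸ H) = 1 ↔ a ∈ Units.val '' (H : Set Fˣ) := by
  rw [QuotientGroup.eq_one_iff]
  constructor
  · exact fun h => ⟨_, h, val_toUnit ha⟩
  · rintro ⟨u, hu, rfl⟩
    rwa [toUnit_val]

theorem mk_toUnit_inv_add_one (hneg : (-1 : Fˣ) ∉ H) (x : H) :
    (toUnit ((((x⁻¹ : H) : Fˣ) : F) + 1) : Fˣ ⧸ H) = toUnit (((x : Fˣ) : F) + 1) := by
  have h : toUnit ((((x⁻¹ : H) : Fˣ) : F) + 1) = toUnit (((x : Fˣ) : F) + 1) * (x⁻¹ : H) := by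
    ext
    rw [Units.val_mul, val_toUnit (val_add_one_ne_zero hneg _),
      val_toUnit (val_add_one_ne_zero hneg _)]
    simp only [InvMemClass.coe_inv, Units.val_inv_eq_inv_val]
    field_simp
    ring
  rw [h, QuotientGroup.mk_mul_of_mem _ (x⁻¹).2]

variable [Fintype F]

variable (H) in
/-- Lehmer's cyclotomic number `(0, c)`. -/
noncomputable def cyclotomicNumber (c : Fˣ ⧸ H) : ℕ :=
  #{x : H | (toUnit (((x : Fˣ) : F) + 1) : Fˣ ⧸ H) = c}

variable (H) in
noncomputable def ratioCount (t : H) : ℕ :=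
  #{p : H × H | ((p.1 : Fˣ) : F) + 1 = (t : Fˣ) * (((p.2 : Fˣ) : F) + 1)}

variable (H) in
theorem sum_cyclotomicNumber : ∑ c, cyclotomicNumber H c = Nat.card H := by
  rw [Nat.card_eq_fintype_card (α := H), ← card_univ,
    card_eq_sum_card_fiberwise (f := fun x : H => (toUnit (((x : Fˣ) : F) + 1) : Fˣ ⧸ H))
      (t := univ) fun _ _ => mem_univ _]
  rfl

theorem cyclotomicNumber_one (hds : IsDiffSet (Units.val '' (H : Set Fˣ)) lam)
    (hneg : (-1 : Fˣ) ∉ H) : cyclotomicNumber H 1 = lam := by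
  rw [← hds.card_filter_eq one_ne_zero]
  refine card_bij (fun x _ => (((x : Fˣ) : F) + 1, ((x : Fˣ) : F))) ?_ ?_ ?_
  · intro x hx
    simp only [mem_filter, mem_univ, true_and] at hx ⊢
    exact ⟨(mk_toUnit_eq_one_iff (val_add_one_ne_zero hneg x)).mp hx, ⟨x, x.2, rfl⟩,
      add_sub_cancel_left _ _⟩
  · intro x _ y _ h
    exact Subtype.ext (Units.ext (Prod.ext_iff.mp h).2)
  · rintro ⟨a, b⟩ hab
    simp only [mem_filter, mem_univ, true_and] at hab
    obtain ⟨ha, ⟨y, hy, rfl⟩, hab⟩ := hab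
    obtain rfl : a = y + 1 := by linear_combination hab
    refine ⟨⟨y, hy⟩, ?_, rfl⟩
    simp only [mem_filter, mem_univ, true_and]
    exact (mk_toUnit_eq_one_iff (val_add_one_ne_zero hneg ⟨y, hy⟩)).mpr ha

theorem even_cyclotomicNumber (hneg : (-1 : Fˣ) ∉ H) {c : Fˣ ⧸ H}
    (hc : c ≠ toUnit (2 : F)) : Even (cyclotomicNumber H c) := by
  refine even_card_of_involution (·⁻¹) ?_ (fun x _ => inv_inv x) ?_
  · intro x hx
    simp only [mem_filter, mem_univ, true_and] at hx ⊢
    rwa [mk_toUnit_inv_add_one hneg]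
  · intro x hx hfix
    simp only [mem_filter, mem_univ, true_and] at hx
    have hsq : ((x : Fˣ) : F) * ((x : Fˣ) : F) = 1 := by
      simpa using congrArg (fun y : H => ((y : Fˣ) : F)) (mul_eq_one_iff_eq_inv.mpr hfix.symm)
    rcases mul_self_eq_one_iff.mp hsq with h1 | h1
    · rw [h1, one_add_one_eq_two] at hx
      exact hc hx.symm
    · exact val_add_one_ne_zero hneg x (by rw [h1, neg_add_cancel])

theorem sum_ratioCount_eq_sum_cyclotomicNumber_sq (hneg : (-1 : Fˣ) ∉ H) :
    ∑ t, ratioCount H t = ∑ c, cyclotomicNumber H c ^ 2 := by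
  have hcount : ∀ x y : H,
      #{t : H | ((x : Fˣ) : F) + 1 = (t : Fˣ) * (((y : Fˣ) : F) + 1)} =
        if (toUnit (((x : Fˣ) : F) + 1) : Fˣ ⧸ H) = toUnit (((y : Fˣ) : F) + 1) then 1 else 0 := by
    intro x y
    rw [← Subgroup.card_filter_eq_mul]
    congr 1
    ext t
    simp only [mem_filter, mem_univ, true_and]
    rw [Units.ext_iff, Units.val_mul, val_toUnit (val_add_one_ne_zero hneg x),
      val_toUnit (val_add_one_ne_zero hneg y)]
  -- Both sides count the triples `(x, y, t) ∈ H³` with `x + 1 = t (y + 1)`.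
  unfold cyclotomicNumber ratioCount
  rw [Fintype.sum_card_fiber_sq, card_filter]
  simp only [← hcount]
  exact sum_card_bipartiteAbove_eq_sum_card_bipartiteBelow _

theorem ratioCount_one : ratioCount H 1 = Nat.card H := by
  rw [Nat.card_eq_fintype_card (α := H), ← card_univ,
    ← diag_card (univ : Finset H), diag_eq_filter, univ_product_univ, ratioCount]
  congr 1
  ext p
  simp only [mem_filter, mem_univ, true_and, OneMemClass.coe_one, Units.val_one, one_mul,
    add_left_inj, Units.val_inj, Subtype.coe_inj]

theorem ratioCount_of_ne_one (hds : IsDiffSet (Units.val '' (H : Set Fˣ)) lam) {t : H}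
    (ht : t ≠ 1) : ratioCount H t = lam := by
  have ht' : ((t : Fˣ) : F) - 1 ≠ 0 := by
    rw [sub_ne_zero, ← Units.val_one, ne_eq, Units.val_inj, ← H.coe_one, Subtype.coe_inj]
    exact ht
  rw [← hds.card_filter_eq ht']
  -- `(x, y) ↦ (x, t y)` turns `x + 1 = t (y + 1)` into `x - t y = t - 1`.
  refine card_bij (fun p _ => (((p.1 : Fˣ) : F), (((t * p.2 : H) : Fˣ) : F))) ?_ ?_ ?_
  · intro p hp
    simp only [mem_filter, mem_univ, true_and] at hp ⊢
    refine ⟨⟨p.1, p.1.2, rfl⟩, ⟨_, (t * p.2).2, rfl⟩, ?_⟩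
    simp only [Subgroup.coe_mul, Units.val_mul]
    linear_combination hp
  · intro p _ q _ h
    simp only [Prod.mk.injEq, Units.val_inj, Subtype.coe_inj, mul_right_inj] at h
    exact Prod.ext h.1 h.2
  · rintro ⟨a, b⟩ hab
    simp only [mem_filter, mem_univ, true_and] at hab
    obtain ⟨⟨x, hx, rfl⟩, ⟨y, hy, rfl⟩, hxy⟩ := hab
    refine ⟨(⟨x, hx⟩, t⁻¹ * ⟨y, hy⟩), ?_, by simp⟩
    simp only [mem_filter, mem_univ, true_and, Subgroup.coe_mul, Units.val_mul,
      InvMemClass.coe_inv, Units.val_inv_eq_inv_val]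
    field_simp
    linear_combination hxy

theorem sum_cyclotomicNumber_sq (hds : IsDiffSet (Units.val '' (H : Set Fˣ)) lam)
    (hneg : (-1 : Fˣ) ∉ H) :
    ∑ c, cyclotomicNumber H c ^ 2 = Nat.card H + (Nat.card H - 1) * lam := by
  rw [← sum_ratioCount_eq_sum_cyclotomicNumber_sq hneg, ← add_sum_erase _ _ (mem_univ 1),
    ratioCount_one, Finset.sum_congr rfl fun t ht => ratioCount_of_ne_one hds (ne_of_mem_erase ht),
    sum_const, card_erase_of_mem (mem_univ _), card_univ, smul_eq_mul,
    Nat.card_eq_fintype_card (α := H)]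

theorem card_sub_one_eq_index_mul (hds : IsDiffSet (Units.val '' (H : Set Fˣ)) lam) :
    Nat.card H - 1 = H.index * lam := by
  have h := hds.card_mul_card_sub_one
  rw [Nat.card_image_of_injective Units.val_injective, SetLike.coe_sort_coe, ← Nat.card_units F,
    ← H.card_mul_index, mul_assoc] at h
  exact Nat.eq_of_mul_eq_mul_left Nat.card_pos h

theorem sum_erase_one_cyclotomicNumber_sub_sq (hds : IsDiffSet (Units.val '' (H : Set Fˣ)) lam)
    (hneg : (-1 : Fˣ) ∉ H) :
    ∑ c ∈ univ.erase 1, ((cyclotomicNumber H c : ℤ) - lam) ^ 2 = Nat.card H - 2 * lam := by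
  have hsum : ∑ c, (cyclotomicNumber H c : ℤ) = Nat.card H := by
    exact_mod_cast sum_cyclotomicNumber H
  have hsq : ∑ c, (cyclotomicNumber H c : ℤ) ^ 2 = Nat.card H + (Nat.card H - 1) * lam := by
    rw [← Nat.cast_one, ← Nat.cast_sub Nat.card_pos]
    exact_mod_cast sum_cyclotomicNumber_sq hds hneg
  have hκ : (Nat.card H : ℤ) - 1 = H.index * lam := by
    rw [← Nat.cast_mul, ← card_sub_one_eq_index_mul hds, Nat.cast_sub Nat.card_pos, Nat.cast_one]
  rw [sum_erase _ (by rw [cyclotomicNumber_one hds hneg, sub_self, zero_pow two_ne_zero])]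
  simp only [sub_sq, sum_add_distrib, sum_sub_distrib, ← sum_mul, ← mul_sum, sum_const,
    card_univ, nsmul_eq_mul, hsum, hsq]
  rw [← Nat.card_eq_fintype_card, ← Subgroup.index]
  linear_combination (-(lam : ℤ)) * hκ

theorem mk_toUnit_two_eq_one (hds : IsDiffSet (Units.val '' (H : Set Fˣ)) lam)
    (hneg : (-1 : Fˣ) ∉ H) (hlam : Odd lam) : (toUnit (2 : F) : Fˣ ⧸ H) = 1 := by
  by_contra h
  have heven := even_cyclotomicNumber hneg (Ne.symm h)
  rw [cyclotomicNumber_one hds hneg] at heven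
  exact Nat.not_even_iff_odd.mpr hlam heven

theorem eight_dvd_card_sub_two_mul_sub_index (hds : IsDiffSet (Units.val '' (H : Set Fˣ)) lam)
    (hneg : (-1 : Fˣ) ∉ H) (hlam : Odd lam) :
    (8 : ℤ) ∣ Nat.card H - 2 * lam - (H.index - 1) := by
  have hodd : ∀ c ∈ univ.erase (1 : Fˣ ⧸ H), Odd ((cyclotomicNumber H c : ℤ) - lam) := by
    intro c hc
    have hc2 : c ≠ toUnit (2 : F) := by
      rw [mk_toUnit_two_eq_one hds hneg hlam]
      exact ne_of_mem_erase hc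
    exact ((Int.even_coe_nat _).mpr (even_cyclotomicNumber hneg hc2)).sub_odd
      ((Int.odd_coe_nat _).mpr hlam)
  have h := Int.eight_dvd_sum_sq_sub_card hodd
  rwa [sum_erase_one_cyclotomicNumber_sub_sq hds hneg, card_erase_of_mem (mem_univ _), card_univ,
    ← Nat.card_eq_fintype_card, ← Subgroup.index,
    Nat.cast_sub (Nat.one_le_iff_ne_zero.mpr H.index_ne_zero_of_finite), Nat.cast_one] at h

theorem IsDiffSet.mod_four_eq_one (hF : ringChar F ≠ 2)
    (hds : IsDiffSet (Units.val '' (H : Set Fˣ)) lam) (hlam : Odd lam) (h8 : 8 ∣ H.index) :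
    lam % 4 = 1 := by
  obtain ⟨m, hm⟩ := h8
  have hκ : Nat.card H = 8 * (m * lam) + 1 := by
    have h := card_sub_one_eq_index_mul hds
    have : 0 < Nat.card H := Nat.card_pos
    rw [hm, mul_assoc] at h
    omega
  have hneg : (-1 : Fˣ) ∉ H :=
    Subgroup.neg_one_notMem_of_odd_card hF ⟨4 * (m * lam), by rw [hκ]; ring⟩
  have h := eight_dvd_card_sub_two_mul_sub_index hds hneg hlam
  rw [hκ, hm] at h
  push_cast at h
  omega

end Cyclotomy

theorem Kset_eq_image_range (F : Type*) [Field F] (ℓ : ℕ) :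
    Kset F ℓ = Units.val '' ((powMonoidHom ℓ : Fˣ →* Fˣ).range : Set Fˣ) := by
  ext a
  constructor
  · rintro ⟨y, rfl⟩
    exact ⟨y ^ ℓ, ⟨y, rfl⟩, rfl⟩
  · rintro ⟨_, ⟨y, rfl⟩, rfl⟩
    exact ⟨y, rfl⟩

theorem index_range_powMonoidHom_units {F : Type*} [Field F] [Finite F] {ℓ : ℕ}
    (hℓ : ℓ ∣ Nat.card F - 1) : (powMonoidHom ℓ : Fˣ →* Fˣ).range.index = ℓ := by
  rw [IsCyclic.index_powMonoidHom_range, Nat.card_units, Nat.gcd_eq_right hℓ]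

theorem diffSet_odd_lambda_mod_four_general {F : Type*} [Field F] [Fintype F] (ℓ : ℕ)
    (hodd : Odd (Fintype.card F)) (hℓ : ℓ ∣ Fintype.card F - 1)
    (lam : ℕ)
    (hds : IsDiffSet (Kset F ℓ) lam)
    (hlamodd : Odd lam) (h8 : 8 ∣ ℓ) :
    lam % 4 = 1 := by
  have hF : ringChar F ≠ 2 := fun h =>
    Nat.not_even_iff_odd.mpr hodd (Nat.even_iff.mpr (FiniteField.even_card_iff_char_two.mp h))
  rw [← Nat.card_eq_fintype_card] at hℓ
  rw [Kset_eq_image_range] at hds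
  exact hds.mod_four_eq_one hF hlamodd (by rwa [index_range_powMonoidHom_units hℓ])

theorem diffSet_odd_lambda_mod_four {F : Type*} [Field F] [Fintype F] (ℓ : ℕ)
    (hodd : Odd (Fintype.card F)) (hℓ : ℓ ∣ Fintype.card F - 1)
    (k : ℕ) (hk : k = (Fintype.card F - 1) / ℓ)
    (lam : ℕ) (hlam : lam = (k - 1) / ℓ)
    (hds : IsDiffSet (Kset F ℓ) lam)
    (hlamodd : Odd lam) (h8 : 8 ∣ ℓ) :
    lam % 4 = 1 :=
  diffSet_odd_lambda_mod_four_general ℓ hodd hℓ lam hds hlamodd h8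
end
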